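/- A nonsymmetric topological operad C has a basepoint if and only if there exists a ∈ C(2) with d₁a and d₂a both in the path-component of 1 ∈ C(1) and with γ(a; 1, a) in the same path-component as γ(a; a, 1) in C(3). -/

import Mathlib

open ContinuousMap unitInterval
universe u v

def sigmaIdx {k : ℕ} {m : Fin k → ℕ} (p : Σ i : Fin k, Fin (m i)) : Fin (∑ i, m i) :=
  ⟨(∑ i' ∈ Finset.univ.filter (fun i' => i' < p.1), m i') + p.2.1, by
    have hins := Finset.sum_le_sum_of_subset
      (f := m) (show insert p.1 (Finset.univ.filter (fun i' => i' < p.1)) ⊆ Finset.univ by simp)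
    rw [Finset.sum_insert (by simp)] at hins
    have := p.2.2
    omega⟩

structure OperadData (C : ℕ → Type u) where
  γ : ∀ {k : ℕ} {m : Fin k → ℕ} {s : ℕ}, (∑ i, m i) = s → C k → (∀ i, C (m i)) → C s
  one : C 1
  one_left : ∀ {k : ℕ} (h : (∑ _i : Fin 1, k) = k) (c : C k), γ h one (fun _ => c) = c
  one_right : ∀ {k : ℕ} (h : (∑ _i : Fin k, (1:ℕ)) = k) (c : C k), γ h c (fun _ => one) = c
  assoc : ∀ {k : ℕ} {m : Fin k → ℕ} {s : ℕ} (hs : (∑ i, m i) = s)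
      {n : Fin s → ℕ} {t : ℕ} (ht : (∑ j, n j) = t)
      {n' : Fin k → ℕ} (hn' : ∀ i, (∑ j : Fin (m i), n (Fin.cast hs (sigmaIdx ⟨i, j⟩))) = n' i)
      (h' : (∑ i, n' i) = t)
      (c : C k) (cs : ∀ i, C (m i)) (ds : ∀ j, C (n j)),
      γ ht (γ hs c cs) ds =
        γ h' c (fun i => γ (hn' i) (cs i) (fun j => ds (Fin.cast hs (sigmaIdx ⟨i, j⟩))))

structure PreTopOperad where
  C : ℕ → Type u
  topC : ∀ k, TopologicalSpace (C k)
  pt : C 0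
  data : OperadData C

attribute [instance] PreTopOperad.topC

structure TopOperad extends PreTopOperad where
  γ_cont : ∀ {k : ℕ} {m : Fin k → ℕ} {s : ℕ} (hs : (∑ i, m i) = s),
    Continuous fun p : C k × (∀ i, C (m i)) => data.γ hs p.1 p.2

lemma sum_ite_fin {k a b : ℕ} (i : Fin k) :
    (∑ j : Fin k, if j = i then a else b) = a + (k - 1) * b := by
  classical
  rw [Finset.sum_ite, Finset.sum_const, Finset.sum_const, Finset.filter_eq',
    if_pos (Finset.mem_univ i), Finset.filter_ne', Finset.card_singleton,
    Finset.card_erase_of_mem (Finset.mem_univ i)]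
  simp [Finset.card_fin, Nat.mul_comm]

/-- The arguments `(1,…,1,*,1,…,1)` with `*` in position `i`. -/
def TopOperad.delArgs (P : TopOperad) {k : ℕ} (i : Fin (k+1)) :
    ∀ j : Fin (k+1), P.C (if j = i then 0 else 1) := fun j =>
  if h : j = i then cast (congrArg P.C (by simp [h] : (if j = i then 0 else 1) = 0)).symm P.pt
  else cast (congrArg P.C (by simp [h] : (if j = i then 0 else 1) = 1)).symm P.data.one

/-- The face map `dᵢ(a) = γ(a; 1,…,1,*,1,…,1)`. -/
def TopOperad.face (P : TopOperad) {k : ℕ} (i : Fin (k+1)) (a : P.C (k+1)) : P.C k :=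
  P.data.γ (m := fun j => if j = i then 0 else 1) (by rw [sum_ite_fin i]; omega) a (P.delArgs i)

/-- The degeneracy map `sᵢ(a) = γ(a; 1,…,1,e₂,1,…,1)` (given an element `e₂ ∈ C(2)`). -/
def TopOperad.degen (P : TopOperad) (e2 : P.C 2) {k : ℕ} (i : Fin (k+1)) (a : P.C (k+1)) :
    P.C (k+2) :=
  P.data.γ (m := fun j => if j = i then 2 else 1) (by rw [sum_ite_fin i]; omega) a
    (fun j => if h : j = i then cast (congrArg P.C (by simp [h] : (if j = i then 2 else 1) = 2)).symm e2
      else cast (congrArg P.C (by simp [h] : (if j = i then 2 else 1) = 1)).symm P.data.one)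

/-- An action of a topological operad on a space. -/
structure OperadAction (P : TopOperad.{u}) (Y : Type v) [TopologicalSpace Y] where
  θ : ∀ {k : ℕ}, P.C k → (Fin k → Y) → Y
  θ_cont : ∀ {k : ℕ}, Continuous fun p : P.C k × (Fin k → Y) => θ p.1 p.2
  θ_one : ∀ y : Fin 1 → Y, θ P.data.one y = y 0
  θ_comp : ∀ {k : ℕ} {m : Fin k → ℕ} {s : ℕ} (hs : (∑ i, m i) = s)
      (c : P.C k) (cs : ∀ i, P.C (m i)) (y : Fin s → Y),
      θ (P.data.γ hs c cs) y = θ c fun i => θ (cs i) fun j => y (Fin.cast hs (sigmaIdx ⟨i, j⟩))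

variable {P : TopOperad.{u}} {Y : Type v} [TopologicalSpace Y]

/-- The basepoint `θ(*) ∈ Y` of a `𝒞`-space. -/
def OperadAction.basept (A : OperadAction P Y) : Y := A.θ P.pt Fin.elim0

/-- The `k`-ary product operation `θ_a : Y^k → Y`. -/
def OperadAction.mapk (A : OperadAction P Y) {k : ℕ} (a : P.C k) : C(Fin k → Y, Y) :=
  ⟨fun y => A.θ a y, A.θ_cont.comp (continuous_const.prodMk continuous_id)⟩

/-- The binary product operation `θ_a : Y × Y → Y`. -/
def OperadAction.map2 (A : OperadAction P Y) (a : P.C 2) : C(Y × Y, Y) :=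
  ⟨fun p => A.θ a ![p.1, p.2],
    A.θ_cont.comp (continuous_const.prodMk (continuous_pi fun i => by
      fin_cases i
      · exact continuous_fst
      · exact continuous_snd))⟩

/-- Dependent pairing over `Fin 2`. -/
def finPair {α : Fin 2 → Sort v} (b : α 0) (c : α 1) : ∀ i, α i
  | ⟨0, _⟩ => b
  | ⟨1, _⟩ => c

/-- Binary composition `γ(a; b, c)` in an operad. -/
def OperadData.γ₂ {C : ℕ → Type u} (D : OperadData C) {p q : ℕ}
    (a : C 2) (b : C p) (c : C q) : C (p + q) :=
  D.γ (m := ![p, q]) (by simp [Fin.sum_univ_two]) a (finPair b c)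

/-- A basepoint of a (nonsymmetric) topological operad: a sequence `e_k ∈ 𝒞(k)` with
`e₁ = 1`, `e₀ = *`, and `γ(e_k; e_{m₁},…,e_{m_k})` in the same path-component as `e_m`. -/
structure OperadBasepoint (P : TopOperad.{u}) where
  e : ∀ k, P.C k
  e_one : e 1 = P.data.one
  e_zero : e 0 = P.pt
  e_comp : ∀ {k : ℕ} {m : Fin k → ℕ} {s : ℕ} (hs : (∑ i, m i) = s),
    Joined (P.data.γ hs (e k) (fun i => e (m i))) (e s)

section Aux
variable {Q : TopOperad.{u}}

/-- γ only depends on pointwise data. -/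
lemma gamma_congr {C : ℕ → Type u} (D : OperadData C) {k : ℕ} {m m' : Fin k → ℕ}
    (hm : ∀ i, m i = m' i) {s : ℕ} (hs : (∑ i, m i) = s) (hs' : (∑ i, m' i) = s)
    (c : C k) (cs : ∀ i, C (m i)) (cs' : ∀ i, C (m' i))
    (hcs : ∀ i, HEq (cs i) (cs' i)) :
    D.γ hs c cs = D.γ hs' c cs' := by
  have hmm : m = m' := funext hm
  subst hmm
  have : cs = cs' := funext fun i => eq_of_heq (hcs i)
  subst this
  rfl

lemma gamma_nil (D : OperadData Q.C) {m : Fin 0 → ℕ} (hs : (∑ i, m i) = 0)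
    (c : Q.C 0) (cs : ∀ i, Q.C (m i)) : D.γ hs c cs = c := by
  have hm : ∀ i : Fin 0, m i = 1 := fun i => i.elim0
  rw [gamma_congr D hm hs (by simpa [Finset.sum_congr rfl] using hs) c cs (fun _ => D.one)
    (fun i => i.elim0)]
  exact D.one_right _ c

lemma gamma_one (D : OperadData Q.C) {m : Fin 1 → ℕ} {s : ℕ} (hs : (∑ i, m i) = s)
    (cs : ∀ i, Q.C (m i)) (h0 : m 0 = s) :
    D.γ hs D.one cs = cast (congrArg Q.C h0) (cs 0) := by
  have hm : ∀ i : Fin 1, m i = s := fun i => by rw [Subsingleton.elim i 0]; exact h0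
  rw [gamma_congr D hm hs (by simpa using hs.symm.trans h0.symm ▸ (rfl : s = s); ) 
    D.one cs (fun _ => cast (congrArg Q.C h0) (cs 0)) (fun i => by
      rw [Subsingleton.elim i 0]; exact (cast_heq _ _).symm)]
  exact D.one_left _ _

/-- Joined is preserved by γ in all arguments. -/
lemma joined_gamma {k : ℕ} {m : Fin k → ℕ} {s : ℕ} (hs : (∑ i, m i) = s)
    {c c' : Q.C k} (hc : Joined c c') {cs cs' : ∀ i, Q.C (m i)}
    (hcs : ∀ i, Joined (cs i) (cs' i)) :
    Joined (Q.data.γ hs c cs) (Q.data.γ hs c' cs') := by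
  obtain ⟨pc⟩ := hc
  have ps : ∀ i, Path (cs i) (cs' i) := fun i => (hcs i).somePath
  exact ⟨⟨⟨fun t => Q.data.γ hs (pc t) (fun i => ps i t),
    (Q.γ_cont hs).comp (pc.continuous.prodMk (continuous_pi fun i =>
      (ps i).continuous))⟩, by simp, by simp⟩⟩

def finl {p q s : ℕ} (h : p + q = s) (j : Fin p) : Fin s := ⟨j.1, by omega⟩
def finr {p q s : ℕ} (h : p + q = s) (j : Fin q) : Fin s := ⟨p + j.1, by omega⟩

lemma sum_fin2 {p q : ℕ} : (∑ i, ![p, q] i) = p + q := by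
  simp [Fin.sum_univ_two]

/-- Binary associativity extracted from the operad axiom. -/
lemma assoc₂ (D : OperadData Q.C) (a : Q.C 2) {p q s : ℕ} (hpq : p + q = s)
    (b : Q.C p) (c : Q.C q) {n : Fin s → ℕ} {t : ℕ} (ht : (∑ j, n j) = t)
    {tb tc : ℕ} (htb : (∑ j : Fin p, n (finl hpq j)) = tb)
    (htc : (∑ j : Fin q, n (finr hpq j)) = tc) (htt : tb + tc = t)
    (ds : ∀ j, Q.C (n j)) :
    D.γ ht (D.γ (sum_fin2.trans hpq) a (finPair b c)) ds =
      D.γ (sum_fin2.trans htt) a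
        (finPair (D.γ htb b (fun j => ds (finl hpq j))) (D.γ htc c (fun j => ds (finr hpq j)))) := by
  have hs : (∑ i, ![p, q] i) = s := sum_fin2.trans hpq
  have hidx0 : ∀ j : Fin p,
      Fin.cast hs (sigmaIdx (⟨0, j⟩ : Σ i : Fin 2, Fin (![p, q] i))) = finl hpq j := by
    intro j
    apply Fin.ext
    simp [sigmaIdx, finl]
  have hidx1 : ∀ j : Fin q,
      Fin.cast hs (sigmaIdx (⟨1, j⟩ : Σ i : Fin 2, Fin (![p, q] i))) = finr hpq j := by
    intro j
    apply Fin.ext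
    simp [sigmaIdx, finr, Finset.filter_eq']
  have hn' : ∀ i : Fin 2,
      (∑ j : Fin (![p, q] i), n (Fin.cast hs (sigmaIdx ⟨i, j⟩))) = ![tb, tc] i := by
    intro i
    fin_cases i
    · rw [← htb]
      exact Finset.sum_congr rfl fun j _ => congrArg n (hidx0 j)
    · rw [← htc]
      exact Finset.sum_congr rfl fun j _ => congrArg n (hidx1 j)
  rw [D.assoc hs ht hn' (sum_fin2.trans htt) a (finPair b c) ds]
  congr 1
  funext i
  fin_cases i
  · exact gamma_congr D (fun j => congrArg n (hidx0 j)) _ htb b _ _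
      (fun j => congr_arg_heq ds (hidx0 j))
  · exact gamma_congr D (fun j => congrArg n (hidx1 j)) _ htc c _ _
      (fun j => congr_arg_heq ds (hidx1 j))

end Aux


/-- Dependent triple over `Fin 3`. -/
def finTriple {α : Fin 3 → Sort v} (x : α 0) (y : α 1) (z : α 2) : ∀ i, α i
  | ⟨0, _⟩ => x
  | ⟨1, _⟩ => y
  | ⟨2, _⟩ => z

/-- The candidate basepoint sequence: iterated right-normalized products. -/
def bpe (P : TopOperad.{u}) (a : P.C 2) : ∀ k, P.C k
  | 0 => P.pt
  | 1 => P.data.one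
  | (k+2) => P.data.γ (m := ![1, k+1]) (by rw [sum_fin2]; omega) a (finPair P.data.one (bpe P a (k+1)))

section Construct
variable {P : TopOperad.{u}} {a : P.C 2}
  (ha0 : Joined (P.face 0 a) P.data.one) (ha1 : Joined (P.face 1 a) P.data.one)
  (hassoc : Joined (P.data.γ₂ a P.data.one a : P.C 3) (P.data.γ₂ a a P.data.one : P.C 3))

local notation "e" => bpe P a

include ha0 in
lemma bpe_zero_mul {q : ℕ} (h : (∑ i, ![0, q] i) = q) (x : P.C q) :
    Joined (P.data.γ h a (finPair P.pt x)) x := by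
  have h01 : 0 + 1 = 1 := rfl
  have ht : (∑ _j : Fin 1, q) = q := by simp
  have htb : (∑ j : Fin 0, (fun _ : Fin 1 => q) (finl h01 j)) = 0 := by simp
  have htc : (∑ j : Fin 1, (fun _ : Fin 1 => q) (finr h01 j)) = q := by simp
  have htt : 0 + q = q := by omega
  have key := assoc₂ P.data a h01 P.pt P.data.one (n := fun _ : Fin 1 => q) ht htb htc htt
    (fun _ => x)
  have c0 : P.data.γ htb P.pt (fun j => (fun _ => x) (finl h01 j)) = P.pt :=
    gamma_nil P.data htb P.pt _
  have c1 : P.data.γ htc P.data.one (fun j => (fun _ => x) (finr h01 j)) = x :=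
    gamma_one P.data htc _ rfl
  erw [c0, c1] at key
  have hface : P.face 0 a = P.data.γ (sum_fin2.trans h01) a (finPair P.pt P.data.one) := by
    refine gamma_congr P.data (fun j => by fin_cases j <;> rfl) _ _ a _ _ (fun j => ?_)
    fin_cases j <;> exact HEq.rfl
  have key2 : P.data.γ h a (finPair P.pt x) =
      P.data.γ ht (P.face 0 a) (fun _ => x) := by
    rw [hface, key]
  rw [key2]
  have := joined_gamma ht ha0 (fun _ : Fin 1 => Joined.refl x)
  rw [P.data.one_left ht x] at this
  exact this

include ha1 in
lemma bpe_one_mul {q s : ℕ} (h : (∑ i, ![1, q] i) = s) (hq : 1 + q = s) :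
    Joined (P.data.γ h a (finPair P.data.one (e q))) (e s) := by
  match q, hq with
  | 0, hq =>
    obtain rfl : s = 1 := by omega
    have hface : P.data.γ h a (finPair P.data.one (bpe P a 0)) = P.face 1 a := by
      refine gamma_congr P.data (fun j => by fin_cases j <;> rfl) _ _ a _ _ (fun j => ?_)
      fin_cases j <;> exact HEq.rfl
    rw [hface]
    exact ha1
  | (k+1), hq =>
    obtain rfl : s = k + 2 := by omega
    exact Joined.refl _

include ha0 ha1 hassoc in
lemma bpe_mul : ∀ (p : ℕ) {q s : ℕ} (h : (∑ i, ![p, q] i) = s) (hpq : p + q = s),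
    Joined (P.data.γ h a (finPair (e p) (e q))) (e s) := by
  intro p
  induction p with
  | zero =>
    intro q s h hpq
    obtain rfl : s = q := by omega
    exact bpe_zero_mul ha0 h _
  | succ k ih =>
    intro q s h hpq
    cases k with
    | zero => exact bpe_one_mul ha1 h hpq
    | succ k' =>
      set n : Fin 3 → ℕ := ![1, k'+1, q] with hn
      set ds : ∀ j, P.C (n j) := finTriple P.data.one (bpe P a (k'+1)) (bpe P a q) with hds
      have h21 : 2 + 1 = 3 := rfl
      have h12 : 1 + 2 = 3 := rfl
      have ht : (∑ j, n j) = s := by rw [hn, Fin.sum_univ_three]; show 1 + (k'+1) + q = s; omega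
      have htb : (∑ j : Fin 2, n (finl h21 j)) = k' + 2 := by
        rw [Fin.sum_univ_two]; show 1 + (k'+1) = k' + 2; omega
      have htc : (∑ j : Fin 1, n (finr h21 j)) = q := by rw [Fin.sum_univ_one]; rfl
      have htt : (k' + 2) + q = s := by omega
      have keyA := assoc₂ P.data a h21 a P.data.one (n := n) ht htb htc htt ds
      have compA0 : P.data.γ htb a (fun j => ds (finl h21 j)) = bpe P a (k'+2) :=
        gamma_congr P.data (fun j => by fin_cases j <;> rfl) htb (by rw [sum_fin2]; omega)
          a _ _ (fun j => by fin_cases j <;> exact HEq.rfl)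
      have compA1 : P.data.γ htc P.data.one (fun j => ds (finr h21 j)) = bpe P a q :=
        gamma_one P.data htc _ rfl
      erw [compA0, compA1] at keyA
      have E1 : P.data.γ h a (finPair (bpe P a (k'+2)) (bpe P a q)) =
          P.data.γ ht (P.data.γ (sum_fin2.trans h21) a (finPair a P.data.one)) ds := keyA.symm
      rw [E1]
      have step1 : Joined
          (P.data.γ ht (P.data.γ (sum_fin2.trans h21) a (finPair a P.data.one)) ds)
          (P.data.γ ht (P.data.γ (sum_fin2.trans h12) a (finPair P.data.one a)) ds) :=
        joined_gamma ht hassoc.symm (fun j => Joined.refl _)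
      refine step1.trans ?_
      have htb' : (∑ j : Fin 1, n (finl h12 j)) = 1 := by rw [Fin.sum_univ_one]; rfl
      have htc' : (∑ j : Fin 2, n (finr h12 j)) = (k'+1) + q := by rw [Fin.sum_univ_two]; rfl
      have htt' : 1 + ((k'+1) + q) = s := by omega
      have keyB := assoc₂ P.data a h12 P.data.one a (n := n) ht htb' htc' htt' ds
      have compB0 : P.data.γ htb' P.data.one (fun j => ds (finl h12 j)) = P.data.one :=
        gamma_one P.data htb' _ rfl
      erw [compB0] at keyB
      rw [keyB]
      have inner : Joined (P.data.γ htc' a (fun j => ds (finr h12 j)))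
          (bpe P a ((k'+1) + q)) := by
        rw [gamma_congr P.data (fun j => by fin_cases j <;> rfl) htc'
          (sum_fin2 : (∑ i, ![k'+1, q] i) = (k'+1) + q) a _
          (finPair (bpe P a (k'+1)) (bpe P a q)) (fun j => by fin_cases j <;> exact HEq.rfl)]
        exact ih sum_fin2 rfl
      have step2 : Joined
          (P.data.γ (sum_fin2.trans htt') a
            (finPair P.data.one (P.data.γ htc' a (fun j => ds (finr h12 j)))))
          (P.data.γ (sum_fin2.trans htt') a
            (finPair P.data.one (bpe P a ((k'+1) + q)))) :=
        joined_gamma _ (Joined.refl a) (fun i => by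
          fin_cases i
          · exact Joined.refl _
          · exact inner)
      exact step2.trans (bpe_one_mul ha1 _ htt')

include ha0 ha1 hassoc in
lemma bpe_comp : ∀ (k : ℕ) {m : Fin k → ℕ} {s : ℕ} (hs : (∑ i, m i) = s),
    Joined (P.data.γ hs (e k) (fun i => e (m i))) (e s) := by
  intro k
  induction k with
  | zero =>
    intro m s hs
    obtain rfl : s = 0 := by simpa using hs.symm
    rw [gamma_nil P.data hs _ _]
  | succ k ih =>
    intro m s hs
    cases k with
    | zero =>
      have h0 : m 0 = s := by simpa using hs
      subst h0
      show Joined (P.data.γ hs P.data.one fun i => bpe P a (m i)) _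
      rw [gamma_one P.data hs _ rfl]
      exact Joined.refl _
    | succ k' =>
      have h1 : 1 + (k' + 1) = k' + 2 := by omega
      set tb := m (finl h1 0) with htbdef
      set tc := ∑ j : Fin (k'+1), m (finr h1 j) with htcdef
      have htb : (∑ j : Fin 1, m (finl h1 j)) = tb := Fin.sum_univ_one _
      have htc : (∑ j : Fin (k'+1), m (finr h1 j)) = tc := rfl
      have htt : tb + tc = s := by
        have e0 : m (finl h1 0) = m 0 := congrArg m (Fin.ext (by simp [finl]))
        have e1 : (∑ j : Fin (k'+1), m (finr h1 j)) = ∑ i : Fin (k'+1), m i.succ :=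
          Finset.sum_congr rfl fun j _ => congrArg m (Fin.ext (by simp [finr, Nat.add_comm]))
        rw [← hs, htbdef, htcdef, e0, e1]
        exact (Fin.sum_univ_succ m).symm
      have E : P.data.γ hs (bpe P a (k'+2)) (fun i => bpe P a (m i)) =
          P.data.γ (sum_fin2.trans htt) a
            (finPair (P.data.γ htb P.data.one (fun j => bpe P a (m (finl h1 j))))
              (P.data.γ htc (bpe P a (k'+1)) (fun j => bpe P a (m (finr h1 j))))) :=
        assoc₂ P.data a h1 P.data.one (bpe P a (k'+1)) (n := m) hs htb htc htt
          (fun i => bpe P a (m i))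
      rw [E]
      have comp0 : P.data.γ htb P.data.one (fun j => bpe P a (m (finl h1 j))) = bpe P a tb :=
        gamma_one P.data htb _ rfl
      erw [comp0]
      have comp1 : Joined (P.data.γ htc (bpe P a (k'+1)) (fun j => bpe P a (m (finr h1 j))))
          (bpe P a tc) := ih htc
      refine Joined.trans (joined_gamma _ (Joined.refl a) (fun i => ?_))
        (bpe_mul ha0 ha1 hassoc tb (sum_fin2.trans htt) htt)
      fin_cases i
      · exact Joined.refl _
      · exact comp1

end Construct

/-- A nonsymmetric topological operad `𝒞` has a basepoint if and only if
there exists `a ∈ 𝒞(2)` with `d₁a` and `d₂a` in the path-component of `1 ∈ 𝒞(1)` and with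
`γ(a; 1, a)` in the same path-component as `γ(a; a, 1)` in `𝒞(3)`. -/
theorem exists_basepoint_iff (P : TopOperad.{u}) :
    Nonempty (OperadBasepoint P) ↔
      ∃ a : P.C 2, Joined (P.face 0 a) P.data.one ∧ Joined (P.face 1 a) P.data.one ∧
        Joined (P.data.γ₂ a P.data.one a : P.C 3) (P.data.γ₂ a a P.data.one : P.C 3) := by
  constructor
  · rintro ⟨B⟩
    refine ⟨B.e 2, ?_, ?_, ?_⟩
    · have hh : P.face 0 (B.e 2) =
          P.data.γ (m := fun j : Fin 2 => if j = 0 then 0 else 1)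
            (by rw [sum_ite_fin 0]) (B.e 2)
            (fun i => B.e (if i = 0 then 0 else 1)) := by
        refine gamma_congr P.data (fun _ => rfl) _ _ (B.e 2) _ _ (fun i => ?_)
        fin_cases i
        · exact heq_of_eq B.e_zero.symm
        · exact heq_of_eq B.e_one.symm
      rw [hh]
      have h2 := B.e_comp (k := 2) (m := fun j : Fin 2 => if j = 0 then 0 else 1)
        (s := 1) (by rw [sum_ite_fin 0])
      rw [B.e_one] at h2
      exact h2
    · have hh : P.face 1 (B.e 2) =
          P.data.γ (m := fun j : Fin 2 => if j = 1 then 0 else 1)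
            (by rw [sum_ite_fin 1]) (B.e 2)
            (fun i => B.e (if i = 1 then 0 else 1)) := by
        refine gamma_congr P.data (fun _ => rfl) _ _ (B.e 2) _ _ (fun i => ?_)
        fin_cases i
        · exact heq_of_eq B.e_one.symm
        · exact heq_of_eq B.e_zero.symm
      rw [hh]
      have h2 := B.e_comp (k := 2) (m := fun j : Fin 2 => if j = 1 then 0 else 1)
        (s := 1) (by rw [sum_ite_fin 1])
      rw [B.e_one] at h2
      exact h2
    · have hA : (∑ i, ![1, 2] i) = 3 := by simp [Fin.sum_univ_two]
      have hB : (∑ i, ![2, 1] i) = 3 := by simp [Fin.sum_univ_two]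
      have h1 : (P.data.γ₂ (B.e 2) P.data.one (B.e 2) : P.C 3) =
          P.data.γ hA (B.e 2) (fun i => B.e (![1, 2] i)) := by
        refine gamma_congr P.data (fun _ => rfl) _ _ (B.e 2) _ _ (fun i => ?_)
        fin_cases i
        · exact heq_of_eq B.e_one.symm
        · exact HEq.rfl
      have h2 : (P.data.γ₂ (B.e 2) (B.e 2) P.data.one : P.C 3) =
          P.data.γ hB (B.e 2) (fun i => B.e (![2, 1] i)) := by
        refine gamma_congr P.data (fun _ => rfl) _ _ (B.e 2) _ _ (fun i => ?_)
        fin_cases i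
        · exact HEq.rfl
        · exact heq_of_eq B.e_one.symm
      rw [h1, h2]
      exact (B.e_comp hA).trans (B.e_comp hB).symm
  · rintro ⟨a, ha0, ha1, hassoc⟩
    exact ⟨⟨bpe P a, rfl, rfl, fun {k m s} hs => bpe_comp ha0 ha1 hassoc k hs⟩⟩
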